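/- arXiv:0710.1858 — 4 statements merged into one kernel-verified Lean document; each statement's English description precedes it below -/
import Mathlib

section
/- Let f : ℝ → ℝ be Lipschitz with f(u) = 0 for u ∉ (θ₀, 1) and f(u) > 0 for u ∈ (θ₀, 1), where 0 < θ₀ < 1. Let ū : ℝ → ℝ be a C² function with 0 < ū(x) ≤ 1 for all x, ū'' (x) = −f(ū(x)) for all x, and sup_x ū(x) > θ₀. Then ū ≡ 1. -/
theorem stmt_3 (f : ℝ → ℝ) (θ₀ : ℝ) (K : NNReal) (hf : LipschitzWith K f)
    (hθ : 0 < θ₀) (hθ1 : θ₀ < 1)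
    (hf0 : ∀ u : ℝ, u ∉ Set.Ioo θ₀ 1 → f u = 0)
    (hfpos : ∀ u ∈ Set.Ioo θ₀ 1, 0 < f u)
    (u : ℝ → ℝ) (hu : ContDiff ℝ 2 u)
    (hpos : ∀ x, 0 < u x) (hle : ∀ x, u x ≤ 1)
    (hode : ∀ x, deriv (deriv u) x = -f (u x))
    (hsup : ∃ x, θ₀ < u x) :
    ∀ x, u x = 1 := by
  -- f is nonnegative everywhere
  have hfnn : ∀ v : ℝ, 0 ≤ f v := by
    intro v
    by_cases hv : v ∈ Set.Ioo θ₀ 1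
    · exact (hfpos v hv).le
    · rw [hf0 v hv]
  have hud : Differentiable ℝ u := hu.differentiable (by norm_num)
  have hud' : Differentiable ℝ (deriv u) := by
    have : ContDiff ℝ 1 (deriv u) := by
      have h2 : ContDiff ℝ (1 + 1 : ℕ) u := by exact_mod_cast hu
      exact (contDiff_succ_iff_deriv.mp (by exact_mod_cast h2)).2.2
    exact this.differentiable (by norm_num)
  -- deriv u is antitone
  have hanti : Antitone (deriv u) := by
    apply antitone_of_deriv_nonpos hud'
    intro x
    rw [hode x]
    simpa using hfnn (u x)
  -- deriv u is zero everywhere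
  have hzero : ∀ x, deriv u x = 0 := by
    intro a
    rcases lt_trichotomy (deriv u a) 0 with hm | hm | hm
    · exfalso
      set m := deriv u a with hma
      -- pick b large
      set b := a + u a / (-m) + 1 with hb
      have hab : a < b := by
        have h1 : 0 < u a / (-m) := div_pos (hpos a) (by linarith)
        simp [hb]; linarith
      obtain ⟨c, hc, hceq⟩ := exists_deriv_eq_slope u hab (hud.continuous.continuousOn)
        (fun x _ => (hud x).differentiableWithinAt)
      have hcm : deriv u c ≤ m := hanti hc.1.le
      have : (u b - u a) / (b - a) ≤ m := hceq ▸ hcm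
      have hba : 0 < b - a := by linarith
      have h2 : u b - u a ≤ m * (b - a) := by
        rw [div_le_iff₀ hba] at this; linarith
      have h3 : b - a = u a / (-m) + 1 := by rw [hb]; ring
      have hm0 : (-m) ≠ 0 := by linarith
      have h4 : m * (u a / (-m)) = -u a := by
        have hx := div_mul_cancel₀ (u a) hm0
        linear_combination -hx
      rw [h3] at h2
      nlinarith [hpos b, hpos a]
    · exact hm
    · exfalso
      set m := deriv u a with hma
      set b := a - u a / m - 1 with hb
      have hab : b < a := by
        have h1 : 0 < u a / m := div_pos (hpos a) hm
        simp [hb]; linarith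
      obtain ⟨c, hc, hceq⟩ := exists_deriv_eq_slope u hab (hud.continuous.continuousOn)
        (fun x _ => (hud x).differentiableWithinAt)
      have hcm : m ≤ deriv u c := hanti hc.2.le
      have : m ≤ (u a - u b) / (a - b) := hceq ▸ hcm
      have hba : 0 < a - b := by linarith
      have h2 : m * (a - b) ≤ u a - u b := by
        rw [le_div_iff₀ hba] at this; linarith
      have h3 : a - b = u a / m + 1 := by rw [hb]; ring
      have hm0 : m ≠ 0 := ne_of_gt hm
      have h4 : m * (u a / m) = u a := by
        have hx := div_mul_cancel₀ (u a) hm0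
        linear_combination hx
      rw [h3] at h2
      nlinarith [hpos b, hpos a]
  -- u is constant
  have hconst : ∀ x y, u x = u y := is_const_of_deriv_eq_zero hud hzero
  obtain ⟨x₀, hx₀⟩ := hsup
  have hder2 : ∀ x, deriv (deriv u) x = 0 := by
    intro x
    have : deriv u = fun _ => (0 : ℝ) := funext hzero
    rw [this, deriv_const]
  have hfc : f (u x₀) = 0 := by
    have := hode x₀
    rw [hder2 x₀] at this
    linarith
  have hc1 : u x₀ = 1 := by
    by_contra h
    have hlt : u x₀ < 1 := lt_of_le_of_ne (hle x₀) h
    exact absurd hfc (ne_of_gt (hfpos (u x₀) ⟨hx₀, hlt⟩))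
  intro x
  rw [hconst x x₀, hc1]
end

section
/- Let g : ℝ → ℝ be a C² function with g'' = 0 on the open set U = {x : g(x) < θ₀} where θ₀ > 0, g(x) ≥ 0 for all x, and sup_x g(x) > θ₀. If in addition g is concave on the complement of U (e.g., g'' ≤ 0 everywhere), then U is empty, i.e., g(x) ≥ θ₀ for all x. -/
theorem stmt_5 (g : ℝ → ℝ) (θ₀ : ℝ) (hθ : 0 < θ₀)
    (hg : ContDiff ℝ 2 g)
    (hlin : ∀ x, g x < θ₀ → deriv (deriv g) x = 0)
    (hconc : ∀ x, deriv (deriv g) x ≤ 0)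
    (hnonneg : ∀ x, 0 ≤ g x)
    (hsup : ∃ x, θ₀ < g x) :
    ∀ x, θ₀ ≤ g x := by
  have hg1 : Differentiable ℝ g := hg.differentiable (by norm_num)
  have hg2 : Differentiable ℝ (deriv g) := by
    rw [show (2 : WithTop ℕ∞) = 1 + 1 from rfl] at hg
    exact (contDiff_succ_iff_deriv.mp hg).2.2.differentiable (by norm_num)
  have hanti : Antitone (deriv g) := by
    intro a b hab
    exact antitone_of_deriv_nonpos hg2 hconc hab
  -- deriv g is identically zero
  have hzero : ∀ a, deriv g a = 0 := by
    intro a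
    by_contra h
    rcases lt_or_gt_of_ne h with hneg | hpos
    · -- deriv g a < 0 : g goes to -∞ on the right
      set d := deriv g a with hd
      set x := a + (g a + 1) / (-d) with hx
      have hax : a < x := by
        have : 0 < (g a + 1) / (-d) := by
          apply div_pos (by have := hnonneg a; linarith) (by linarith)
        rw [hx]; linarith
      obtain ⟨c, hc, hceq⟩ := exists_deriv_eq_slope g hax
        (hg1.continuous.continuousOn) (hg1.differentiableOn)
      have hcd : deriv g c ≤ d := hanti (le_of_lt hc.1)
      have hxa : x - a = (g a + 1) / (-d) := by rw [hx]; ring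
      have hslope : (g x - g a) / (x - a) ≤ d := hceq ▸ hcd
      have hpos' : 0 < x - a := by linarith
      have : g x - g a ≤ d * (x - a) := by
        have := (div_le_iff₀ hpos').mp hslope
        linarith
      rw [hxa] at this
      have hdne : (-d) ≠ 0 := by linarith
      have heq : d * ((g a + 1) / (-d)) = -(g a + 1) := by
        field_simp
      have hgx : g x ≤ -1 := by linarith
      have := hnonneg x
      linarith
    · -- deriv g a > 0 : g goes to -∞ on the left
      set d := deriv g a with hd
      set x := a - (g a + 1) / d with hx
      have hax : x < a := by
        have : 0 < (g a + 1) / d := by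
          apply div_pos (by have := hnonneg a; linarith) hpos
        rw [hx]; linarith
      obtain ⟨c, hc, hceq⟩ := exists_deriv_eq_slope g hax
        (hg1.continuous.continuousOn) (hg1.differentiableOn)
      have hcd : d ≤ deriv g c := hanti (le_of_lt hc.2)
      have hslope : d ≤ (g a - g x) / (a - x) := hceq ▸ hcd
      have hpos' : 0 < a - x := by linarith
      have hxa : a - x = (g a + 1) / d := by rw [hx]; ring
      have hgx : g x ≤ -1 := by
        rw [hxa] at hslope
        have hpos'' : 0 < (g a + 1) / d := by rw [← hxa]; linarith
        have h3 := (le_div_iff₀ hpos'').mp hslope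
        have heq : d * ((g a + 1) / d) = g a + 1 := by
          field_simp
        linarith
      have := hnonneg x
      linarith
  obtain ⟨x₀, hx₀⟩ := hsup
  intro x
  have hconst := is_const_of_deriv_eq_zero hg1 hzero x x₀
  linarith
end

section
/- With ζ̂ as above (ζ̂'' = −f_min(ζ̂), ζ̂(0) = h₀ ∈ (θ₀,1), ζ̂'(0) = 0, f_min an ignition nonlinearity with ignition temperature θ₀, extended by zero for negative arguments): ζ̂ is strictly concave on the set where θ₀ < ζ̂ < 1, ζ̂ is strictly decreasing on (0, ∞) until it reaches 0, there exist 0 < z₁ < z₂ with ζ̂(z₁) = θ₀ and ζ̂(z₂) = 0, and ζ̂ is affine on [z₁, z₂] with slope ζ̂'(z₁) < 0. -/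
theorem stmt_11 (fmin : ℝ → ℝ) (θ₀ h₀ : ℝ) (K : NNReal)
    (hf : LipschitzWith K fmin)
    (hθ : 0 < θ₀) (hθ1 : θ₀ < 1)
    (hf0 : ∀ u : ℝ, u ≤ θ₀ → fmin u = 0)
    (hf1 : ∀ u : ℝ, 1 ≤ u → fmin u = 0)
    (hfpos : ∀ u ∈ Set.Ioo θ₀ 1, 0 < fmin u)
    (hh₀ : h₀ ∈ Set.Ioo θ₀ 1)
    (ζ : ℝ → ℝ) (hζ : ContDiff ℝ 2 ζ)
    (hode : ∀ x, deriv (deriv ζ) x = -fmin (ζ x))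
    (hinit : ζ 0 = h₀) (hinit' : deriv ζ 0 = 0) :
    (∀ x, θ₀ < ζ x → ζ x < 1 → deriv (deriv ζ) x < 0) ∧
    ∃ z₁ z₂ : ℝ, 0 < z₁ ∧ z₁ < z₂ ∧ ζ z₁ = θ₀ ∧ ζ z₂ = 0 ∧
      deriv ζ z₁ < 0 ∧
      (∀ x ∈ Set.Icc z₁ z₂, ζ x = θ₀ + deriv ζ z₁ * (x - z₁)) ∧
      StrictAntiOn ζ (Set.Icc 0 z₂) := by
  have hfnn : ∀ u : ℝ, 0 ≤ fmin u := by
    intro u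
    rcases le_or_gt u θ₀ with h | h
    · rw [hf0 u h]
    rcases lt_or_ge u 1 with h1 | h1
    · exact (hfpos u ⟨h, h1⟩).le
    · rw [hf1 u h1]
  have hζd : Differentiable ℝ ζ := hζ.differentiable (by norm_num)
  have hζ'd : Differentiable ℝ (deriv ζ) := by
    have h2 : ContDiff ℝ ((1 : ℕ∞) + 1) ζ := by exact_mod_cast hζ
    exact ((contDiff_succ_iff_deriv.mp h2).2.2).differentiable (by norm_num)
  have h2le : ∀ x, deriv (deriv ζ) x ≤ 0 := fun x => by
    rw [hode]; simpa using hfnn (ζ x)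
  have hζ'anti : Antitone (deriv ζ) :=
    antitone_of_deriv_nonpos hζ'd h2le
  have hζ'le : ∀ x, 0 ≤ x → deriv ζ x ≤ 0 := fun x hx => by
    have := hζ'anti hx; rwa [hinit'] at this
  have h20 : deriv (deriv ζ) 0 < 0 := by
    rw [hode 0, hinit]
    simpa using hfpos h₀ hh₀
  have h2cont : Continuous (deriv (deriv ζ)) := by
    have h : (deriv (deriv ζ)) = fun x => -fmin (ζ x) := funext hode
    rw [h]; exact (hf.continuous.comp hζd.continuous).neg
  -- find δ > 0 on which ζ'' < 0 near 0
  obtain ⟨δ, hδpos, hδ⟩ : ∃ δ > 0, ∀ y ∈ Metric.ball (0 : ℝ) δ, deriv (deriv ζ) y < 0 := by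
    have h := (h2cont.continuousAt (x := (0 : ℝ))).eventually_lt continuousAt_const h20
    rcases Metric.eventually_nhds_iff_ball.mp h with ⟨δ, hδ, hb⟩
    exact ⟨δ, hδ, hb⟩
  have hζ'neg : ∀ x, 0 < x → deriv ζ x < 0 := by
    intro x hx
    set y := min x (δ / 2) with hy
    have hy0 : 0 < y := lt_min hx (by linarith)
    have hsa : StrictAntiOn (deriv ζ) (Set.Icc 0 y) := by
      apply strictAntiOn_of_deriv_neg (convex_Icc _ _) hζ'd.continuous.continuousOn
      intro z hz
      rw [interior_Icc] at hz
      apply hδ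
      have hyδ : y ≤ δ / 2 := min_le_right _ _
      simp only [Metric.mem_ball, Real.dist_eq, sub_zero]
      rw [abs_of_pos hz.1]
      linarith [hz.2]
    have h1 : deriv ζ y < deriv ζ 0 :=
      hsa ⟨le_rfl, hy0.le⟩ ⟨hy0.le, le_rfl⟩ hy0
    rw [hinit'] at h1
    calc deriv ζ x ≤ deriv ζ y := hζ'anti (min_le_left _ _)
      _ < 0 := h1
  -- ζ goes below 0 eventually
  set a := δ / 2 with ha
  have hapos : 0 < a := by positivity
  have hca : deriv ζ a < 0 := hζ'neg a hapos
  set X := a + (|ζ a| + 1) / (-deriv ζ a) with hX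
  have hXa : a < X := by
    have h : 0 < (|ζ a| + 1) / (-deriv ζ a) :=
      div_pos (by positivity) (by linarith)
    rw [hX]
    linarith [h]
  have hζX : ζ X < 0 := by
    obtain ⟨t, ht, hslope⟩ := exists_deriv_eq_slope ζ hXa hζd.continuous.continuousOn
      (fun z _ => (hζd z).differentiableWithinAt)
    have h1 : deriv ζ t ≤ deriv ζ a := hζ'anti ht.1.le
    have hXane : X - a ≠ 0 := ne_of_gt (sub_pos.mpr hXa)
    have h2 : ζ X - ζ a = deriv ζ t * (X - a) := by
      rw [hslope]; field_simp
    have h3 : ζ X ≤ ζ a + deriv ζ a * (X - a) := by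
      nlinarith [sub_pos.mpr hXa]
    have h4 : deriv ζ a * (X - a) = -(|ζ a| + 1) := by
      have hne : deriv ζ a ≠ 0 := ne_of_lt hca
      rw [hX]
      field_simp
      ring
    rw [h4] at h3
    have := abs_nonneg (ζ a)
    have := le_abs_self (ζ a)
    linarith
  -- IVT for z₁
  have hX0 : (0 : ℝ) ≤ X := by linarith
  obtain ⟨z₁, hz₁mem, hz₁⟩ : ∃ z₁ ∈ Set.Icc 0 X, ζ z₁ = θ₀ := by
    have := intermediate_value_Icc' hX0 hζd.continuous.continuousOn
    have hmem : θ₀ ∈ Set.Icc (ζ X) (ζ 0) := by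
      rw [hinit]
      exact ⟨by linarith, hh₀.1.le⟩
    obtain ⟨z, hz, hzv⟩ := this hmem
    exact ⟨z, hz, hzv⟩
  have hz₁pos : 0 < z₁ := by
    rcases hz₁mem.1.lt_or_eq with h | h
    · exact h
    · exfalso; rw [← h, hinit] at hz₁; linarith [hh₀.1]
  have hc : deriv ζ z₁ < 0 := hζ'neg z₁ hz₁pos
  -- ζ is antitone on [0,∞)
  have hAnti : AntitoneOn ζ (Set.Ici 0) := by
    apply antitoneOn_of_deriv_nonpos (convex_Ici _) hζd.continuous.continuousOn
      (fun z _ => (hζd z).differentiableWithinAt)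
    intro z hz
    rw [interior_Ici] at hz
    exact hζ'le z hz.le
  have hle : ∀ x, z₁ ≤ x → ζ x ≤ θ₀ := by
    intro x hx
    have := hAnti (Set.mem_Ici.mpr hz₁pos.le) (Set.mem_Ici.mpr (hz₁pos.le.trans hx)) hx
    rwa [hz₁] at this
  have h2zero : ∀ x, z₁ ≤ x → deriv (deriv ζ) x = 0 := by
    intro x hx
    rw [hode, hf0 _ (hle x hx), neg_zero]
  -- deriv ζ constant on [z₁,∞)
  have hconst : ∀ x, z₁ ≤ x → deriv ζ x = deriv ζ z₁ := by
    have hm : MonotoneOn (deriv ζ) (Set.Ici z₁) := by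
      apply monotoneOn_of_deriv_nonneg (convex_Ici _) hζ'd.continuous.continuousOn
        (fun z _ => (hζ'd z).differentiableWithinAt)
      intro z hz
      rw [interior_Ici] at hz
      exact (h2zero z hz.le).ge
    have hat : AntitoneOn (deriv ζ) (Set.Ici z₁) := by
      apply antitoneOn_of_deriv_nonpos (convex_Ici _) hζ'd.continuous.continuousOn
        (fun z _ => (hζ'd z).differentiableWithinAt)
      intro z hz
      rw [interior_Ici] at hz
      exact (h2zero z hz.le).le
    intro x hx
    exact le_antisymm (hat (Set.mem_Ici.mpr le_rfl) (Set.mem_Ici.mpr hx) hx)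
      (hm (Set.mem_Ici.mpr le_rfl) (Set.mem_Ici.mpr hx) hx)
  -- ζ is affine on [z₁,∞)
  set c := deriv ζ z₁ with hcdef
  have haffine : ∀ x, z₁ ≤ x → ζ x = θ₀ + c * (x - z₁) := by
    set g : ℝ → ℝ := fun x => ζ x - c * (x - z₁) with hg
    have hgd : Differentiable ℝ g := by
      apply hζd.sub
      apply Differentiable.const_mul
      exact differentiable_id.sub_const _
    have hgderiv : ∀ x, deriv g x = deriv ζ x - c := by
      intro x
      rw [hg]
      rw [deriv_fun_sub (hζd x) (by fun_prop)]
      congr 1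
      rw [deriv_const_mul _ (by fun_prop)]
      simp
    have hgm : MonotoneOn g (Set.Ici z₁) := by
      apply monotoneOn_of_deriv_nonneg (convex_Ici _) hgd.continuous.continuousOn
        (fun z _ => (hgd z).differentiableWithinAt)
      intro z hz
      rw [interior_Ici] at hz
      rw [hgderiv, hconst z hz.le]
      simp
    have hga : AntitoneOn g (Set.Ici z₁) := by
      apply antitoneOn_of_deriv_nonpos (convex_Ici _) hgd.continuous.continuousOn
        (fun z _ => (hgd z).differentiableWithinAt)
      intro z hz
      rw [interior_Ici] at hz
      rw [hgderiv, hconst z hz.le]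
      simp
    intro x hx
    have hgeq : g x = g z₁ :=
      le_antisymm (hga (Set.mem_Ici.mpr le_rfl) (Set.mem_Ici.mpr hx) hx)
        (hgm (Set.mem_Ici.mpr le_rfl) (Set.mem_Ici.mpr hx) hx)
    have hgz : g z₁ = θ₀ := by simp [hg, hz₁]
    have : ζ x - c * (x - z₁) = θ₀ := by rw [← hgz, ← hgeq]
    linarith
  -- define z₂
  set z₂ := z₁ - θ₀ / c with hz₂def
  have hz₁₂ : z₁ < z₂ := by
    have : θ₀ / c < 0 := div_neg_of_pos_of_neg hθ hc
    rw [hz₂def]; linarith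
  have hζz₂ : ζ z₂ = 0 := by
    have hne : c ≠ 0 := ne_of_lt hc
    rw [haffine z₂ hz₁₂.le, hz₂def]
    field_simp
    ring
  refine ⟨fun x h1 h2 => by rw [hode]; simpa using hfpos (ζ x) ⟨h1, h2⟩,
    z₁, z₂, hz₁pos, hz₁₂, hz₁, hζz₂, hc, ?_, ?_⟩
  · intro x hx
    exact haffine x hx.1
  · apply strictAntiOn_of_deriv_neg (convex_Icc _ _) hζd.continuous.continuousOn
    intro z hz
    rw [interior_Icc] at hz
    exact hζ'neg z hz.1
end

section
/- Let ζ̂ satisfy ζ̂'' = −f_min(ζ̂) on ℝ with f_min ≥ 0, and let ζ(x) = max(ζ̂(x), 0). Suppose ζ̂(±z₂) = 0 with ζ̂ > 0 on (−z₂, z₂) and ζ̂ affine near ±z₂ with nonzero slopes. Then ζ is a (viscosity/weak) sub-solution of 0 ≤ ζ'' + f(x, ζ) for any f with f(x,u) ≥ f_min(u) for all x, u, i.e., for every nonnegative C² test function φ with compact support, ∫ ζ φ'' + f(x,ζ)φ dx ≥ 0. -/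
open MeasureTheory

theorem stmt_12 (fmin : ℝ → ℝ) (f : ℝ → ℝ → ℝ) (z₂ : ℝ) (hz₂ : 0 < z₂)
    (hfmin_nonneg : ∀ u, 0 ≤ fmin u)
    (hf_ge : ∀ x u, fmin u ≤ f x u)
    (hf_zero : ∀ x, f x 0 = 0)
    (ζhat : ℝ → ℝ) (hζhat : ContDiff ℝ 2 ζhat)
    (hode : ∀ x, deriv (deriv ζhat) x = -fmin (ζhat x))
    (hz : ζhat z₂ = 0) (hz' : ζhat (-z₂) = 0)
    (hposin : ∀ x ∈ Set.Ioo (-z₂) z₂, 0 < ζhat x)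
    -- transversal crossings: affine near ±z₂ with nonzero slopes
    (htransv : deriv ζhat z₂ ≠ 0 ∧ deriv ζhat (-z₂) ≠ 0)
    (haffine : ∃ δ > 0, ∀ x, (|x - z₂| < δ ∨ |x + z₂| < δ) →
      deriv (deriv ζhat) x = 0)
    (ζ : ℝ → ℝ) (hζ : ∀ x, ζ x = max (ζhat x) 0) :
    ∀ φ : ℝ → ℝ, ContDiff ℝ 2 φ → HasCompactSupport φ → (∀ x, 0 ≤ φ x) →
      0 ≤ ∫ x : ℝ, (ζ x * deriv (deriv φ) x + f x (ζ x) * φ x) := by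
  intro φ hφ hφc hφ0
  -- regularity of ζhat
  have hd1 : Differentiable ℝ ζhat := hζhat.differentiable (by norm_num)
  have hder1 : ContDiff ℝ 1 (deriv ζhat) := by
    have := (contDiff_succ_iff_deriv (n := 1)).mp (by exact_mod_cast hζhat)
    exact this.2.2
  have hd2 : Differentiable ℝ (deriv ζhat) := hder1.differentiable one_ne_zero
  have hc2 : Continuous (deriv (deriv ζhat)) := (contDiff_one_iff_deriv.mp hder1).2
  -- regularity of φ
  have hφd1 : Differentiable ℝ φ := hφ.differentiable (by norm_num)
  have hφder1 : ContDiff ℝ 1 (deriv φ) := by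
    have := (contDiff_succ_iff_deriv (n := 1)).mp (by exact_mod_cast hφ)
    exact this.2.2
  have hφd2 : Differentiable ℝ (deriv φ) := hφder1.differentiable one_ne_zero
  have hφc2 : Continuous (deriv (deriv φ)) := (contDiff_one_iff_deriv.mp hφder1).2
  -- ζhat is concave: deriv ζhat is antitone
  have hζ0pos : 0 < ζhat 0 := hposin 0 ⟨by linarith, hz₂⟩
  have hanti : Antitone (deriv ζhat) :=
    antitone_of_deriv_nonpos hd2 (fun x => by rw [hode]; linarith [hfmin_nonneg (ζhat x)])
  -- derivative signs at endpoints
  have hslopeR : deriv ζhat z₂ < 0 := by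
    obtain ⟨c, hc, hceq⟩ := exists_deriv_eq_slope ζhat hz₂ hd1.continuous.continuousOn
      hd1.differentiableOn
    have hcneg : deriv ζhat c < 0 := by
      rw [hceq, hz]
      apply div_neg_of_neg_of_pos <;> linarith
    have := hanti hc.2.le
    linarith
  have hslopeL : 0 < deriv ζhat (-z₂) := by
    obtain ⟨c, hc, hceq⟩ := exists_deriv_eq_slope ζhat (show -z₂ < 0 by linarith)
      hd1.continuous.continuousOn hd1.differentiableOn
    have hcpos : 0 < deriv ζhat c := by
      rw [hceq, hz']
      apply div_pos <;> linarith
    have := hanti hc.1.le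
    linarith
  -- ζhat ≥ 0 on Icc
  have hnonnegIn : ∀ x ∈ Set.Icc (-z₂) z₂, 0 ≤ ζhat x := by
    intro x hx
    rcases eq_or_lt_of_le hx.1 with h | h
    · rw [← h, hz']
    rcases eq_or_lt_of_le hx.2 with h2 | h2
    · rw [h2, hz]
    exact (hposin x ⟨h, h2⟩).le
  -- ζhat ≤ 0 outside Icc
  have hnonposR : ∀ x, z₂ ≤ x → ζhat x ≤ 0 := by
    intro x hx
    have hA : AntitoneOn ζhat (Set.Ici z₂) := by
      apply antitoneOn_of_deriv_nonpos (convex_Ici _) hd1.continuous.continuousOn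
        (hd1.differentiableOn.mono interior_subset)
      intro y hy
      rw [interior_Ici] at hy
      have := hanti (le_of_lt hy)
      linarith
    have := hA Set.self_mem_Ici hx hx
    linarith [hz ▸ this]
  have hnonposL : ∀ x, x ≤ -z₂ → ζhat x ≤ 0 := by
    intro x hx
    have hA : MonotoneOn ζhat (Set.Iic (-z₂)) := by
      apply monotoneOn_of_deriv_nonneg (convex_Iic _) hd1.continuous.continuousOn
        (hd1.differentiableOn.mono interior_subset)
      intro y hy
      rw [interior_Iic] at hy
      have := hanti (le_of_lt hy)
      linarith
    have := hA hx Set.self_mem_Iic hx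
    linarith [hz' ▸ this]
  -- values of ζ
  have hζeqIn : ∀ x ∈ Set.Icc (-z₂) z₂, ζ x = ζhat x := fun x hx => by
    rw [hζ]; exact max_eq_left (hnonnegIn x hx)
  have hζeqOut : ∀ x, x ∉ Set.Icc (-z₂) z₂ → ζ x = 0 := by
    intro x hx
    rw [hζ]
    rw [Set.mem_Icc] at hx
    push_neg at hx
    rcases lt_or_ge x (-z₂) with h | h
    · exact max_eq_right (hnonposL x h.le)
    · exact max_eq_right (hnonposR x (hx h).le)
  have hfmin0 : fmin 0 = 0 :=
    le_antisymm (by have := hf_ge 0 0; rw [hf_zero 0] at this; exact this) (hfmin_nonneg 0)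
  -- continuity of x ↦ fmin (ζ x)
  have hkey : ∀ x, fmin (ζ x) = -deriv (deriv ζhat) (max (-z₂) (min x z₂)) := by
    intro x
    by_cases hx : x ∈ Set.Icc (-z₂) z₂
    · rw [min_eq_left hx.2, max_eq_right hx.1, hode, hζeqIn x hx, neg_neg]
    · rw [Set.mem_Icc] at hx
      push_neg at hx
      rcases lt_or_ge x (-z₂) with h | h
      · rw [min_eq_left (by linarith), max_eq_left h.le, hode, hz', neg_neg,
          hζeqOut x (by rw [Set.mem_Icc]; push_neg; intro h'; linarith)]
      · have h2 := hx h
        rw [min_eq_right h2.le, max_eq_right (by linarith), hode, hz, neg_neg,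
          hζeqOut x (by rw [Set.mem_Icc]; push_neg; intro h'; linarith)]
  have hζfun : ζ = fun x => max (ζhat x) 0 := funext hζ
  have hζcont : Continuous ζ := by rw [hζfun]; exact hd1.continuous.max continuous_const
  have hcontfζ : Continuous (fun x => fmin (ζ x)) := by
    have : (fun x => fmin (ζ x)) = fun x => -deriv (deriv ζhat) (max (-z₂) (min x z₂)) :=
      funext hkey
    rw [this]
    exact (hc2.comp (continuous_const.max (continuous_id.min continuous_const))).neg
  -- the good part of the integrand
  set g₁ : ℝ → ℝ := fun x => ζ x * deriv (deriv φ) x + fmin (ζ x) * φ x with hg₁def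
  have hg₁cont : Continuous g₁ := (hζcont.mul hφc2).add (hcontfζ.mul hφ.continuous)
  have hg₁supp : HasCompactSupport g₁ := by
    apply HasCompactSupport.intro hφc
    intro x hx
    have hφx : φ x = 0 := image_eq_zero_of_notMem_tsupport hx
    have hφ'x : deriv (deriv φ) x = 0 := by
      by_contra hne
      have h1 := support_deriv_subset (Function.mem_support.mpr hne)
      have h2 := (closure_minimal support_deriv_subset isClosed_closure : tsupport (deriv φ) ⊆ tsupport φ) h1
      exact hx h2
    simp [hg₁def, hφx, hφ'x]
  have hg₁int : Integrable g₁ := hg₁cont.integrable_of_hasCompactSupport hg₁supp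
  -- ∫ g₁ ≥ 0 via integration by parts
  have h1 : 0 ≤ ∫ x, g₁ x := by
    have hg₁ind : g₁ = Set.indicator (Set.Icc (-z₂) z₂) g₁ := by
      funext x
      by_cases hx : x ∈ Set.Icc (-z₂) z₂
      · rw [Set.indicator_of_mem hx]
      · rw [Set.indicator_of_notMem hx]
        simp [hg₁def, hζeqOut x hx, hfmin0]
    have hstep : ∫ x, g₁ x = ∫ x in (-z₂)..z₂, g₁ x := by
      rw [intervalIntegral.integral_of_le (by linarith : -z₂ ≤ z₂),
        ← integral_Icc_eq_integral_Ioc]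
      conv_lhs => rw [hg₁ind]
      exact integral_indicator measurableSet_Icc
    rw [hstep]
    have hcongr : ∫ x in (-z₂)..z₂, g₁ x
        = ∫ x in (-z₂)..z₂, (ζhat x * deriv (deriv φ) x - deriv (deriv ζhat) x * φ x) := by
      apply intervalIntegral.integral_congr
      intro x hx
      rw [Set.uIcc_of_le (by linarith : -z₂ ≤ z₂)] at hx
      simp only [hg₁def]
      rw [hζeqIn x hx, hode]
      ring
    rw [hcongr]
    have int1 : IntervalIntegrable (fun x => ζhat x * deriv (deriv φ) x) volume (-z₂) z₂ :=
      (hd1.continuous.mul hφc2).intervalIntegrable _ _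
    have int2 : IntervalIntegrable (fun x => deriv (deriv ζhat) x * φ x) volume (-z₂) z₂ :=
      (hc2.mul hφ.continuous).intervalIntegrable _ _
    have ibp1 : ∫ x in (-z₂)..z₂, ζhat x * deriv (deriv φ) x
        = ζhat z₂ * deriv φ z₂ - ζhat (-z₂) * deriv φ (-z₂)
          - ∫ x in (-z₂)..z₂, deriv ζhat x * deriv φ x :=
      intervalIntegral.integral_mul_deriv_eq_deriv_mul
        (fun x _ => (hd1 x).hasDerivAt) (fun x _ => (hφd2 x).hasDerivAt)
        ((hd2.continuous).intervalIntegrable _ _) (hφc2.intervalIntegrable _ _)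
    have ibp2 : ∫ x in (-z₂)..z₂, deriv ζhat x * deriv φ x
        = deriv ζhat z₂ * φ z₂ - deriv ζhat (-z₂) * φ (-z₂)
          - ∫ x in (-z₂)..z₂, deriv (deriv ζhat) x * φ x :=
      intervalIntegral.integral_mul_deriv_eq_deriv_mul
        (fun x _ => (hd2 x).hasDerivAt) (fun x _ => (hφd1 x).hasDerivAt)
        (hc2.intervalIntegrable _ _) ((hφd2.continuous).intervalIntegrable _ _)
    rw [intervalIntegral.integral_sub int1 int2, ibp1, ibp2, hz, hz']
    nlinarith [mul_nonneg (le_of_lt (neg_pos.mpr hslopeR)) (hφ0 z₂),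
      mul_nonneg hslopeL.le (hφ0 (-z₂))]
  -- split the integral
  by_cases hInt : Integrable (fun x => ζ x * deriv (deriv φ) x + f x (ζ x) * φ x) volume
  · have hg2int : Integrable (fun x => (f x (ζ x) - fmin (ζ x)) * φ x) volume := by
      have heq : (fun x => (f x (ζ x) - fmin (ζ x)) * φ x)
          = fun x => (ζ x * deriv (deriv φ) x + f x (ζ x) * φ x) - g₁ x := by
        funext x; simp only [hg₁def]; ring
      rw [heq]
      exact hInt.sub hg₁int
    have hsplit : ∫ x, (ζ x * deriv (deriv φ) x + f x (ζ x) * φ x)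
        = (∫ x, g₁ x) + ∫ x, (f x (ζ x) - fmin (ζ x)) * φ x := by
      rw [← integral_add hg₁int hg2int]
      congr 1
      funext x
      simp only [hg₁def]
      ring
    rw [hsplit]
    have h2 : 0 ≤ ∫ x, (f x (ζ x) - fmin (ζ x)) * φ x :=
      integral_nonneg fun x => mul_nonneg (by linarith [hf_ge x (ζ x)]) (hφ0 x)
    linarith
  · rw [integral_undef hInt]
end
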